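/- arXiv:1604.06382 — 2 statements merged into one kernel-verified Lean document; each statement's English description precedes it below -/
import Mathlib

section
/- Let T' be a finite tree containing four distinct vertices v, b, w, a such that v–b–w is a path, w is adjacent to a, and in T' the degrees satisfy deg(v) = 1, deg(b) = 2, and deg(a) = 1. Let T be the tree obtained from T' by adding two new vertices u₁, u₂ with edges u₁u₂ and vu₁. Then γ₂(T) = γ₂(T') + 1 and α₂(T) = α₂(T') + 1; in particular α₂(T) − γ₂(T) = α₂(T') − γ₂(T'). -/
open SimpleGraph

/-- `S` is a `k`-dominating set of the subgraph of `G` induced by `U`: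
`S ⊆ U` and every vertex of `U` not in `S` has at least `k` neighbors in `S`. -/
def IsKDomOn {V : Type*} (G : SimpleGraph V) (k : ℕ) (U S : Set V) : Prop :=
  S ⊆ U ∧ ∀ v ∈ U, v ∉ S → k ≤ (G.neighborSet v ∩ S).ncard

/-- `S` is a `k`-independent set of the subgraph of `G` induced by `U`:
`S ⊆ U` and every vertex of `S` has at most `k - 1` neighbors in `S`. -/
def IsKIndOn {V : Type*} (G : SimpleGraph V) (k : ℕ) (U S : Set V) : Prop :=
  S ⊆ U ∧ ∀ v ∈ S, (G.neighborSet v ∩ S).ncard ≤ k - 1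

/-- The `k`-domination number of the subgraph of `G` induced by `U`. -/
noncomputable def gammaK {V : Type*} (G : SimpleGraph V) (k : ℕ) (U : Set V) : ℕ :=
  sInf {n | ∃ S, IsKDomOn G k U S ∧ S.ncard = n}

/-- The `k`-independence number of the subgraph of `G` induced by `U`. -/
noncomputable def alphaK {V : Type*} (G : SimpleGraph V) (k : ℕ) (U : Set V) : ℕ :=
  sSup {n | ∃ S, IsKIndOn G k U S ∧ S.ncard = n}

/-!
A 2-dominating set contains every leaf. So a minimum 2-dominating set of `T'` contains `v`, and
adding `u₂` also 2-dominates `u₁`; conversely a 2-dominating set of `T` contains `u₂` and one of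
`u₁`, `v`, and its trace on `T'` together with `v` 2-dominates `T'`.

Adding `u₂` to a 2-independent set of `T'` gives one of `T`. Conversely the trace on `T'` of a
2-independent set `S` of `T` is 2-independent and misses two elements of `S` only when
`u₁, u₂ ∈ S`, which forces `v ∉ S`; then the trace can be enlarged by `v`, after exchanging `b` for
the leaf `a` when both `b` and `w` lie in it.
-/

lemma Set.ncard_preimage_inl_add_ncard_preimage_inr {α β : Type*} [Finite α] [Finite β]
    (s : Set (α ⊕ β)) : (Sum.inl ⁻¹' s).ncard + (Sum.inr ⁻¹' s).ncard = s.ncard := by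
  conv_rhs => rw [← Set.image_preimage_inl_union_image_preimage_inr s]
  rw [Set.ncard_union_eq Set.disjoint_image_inl_image_inr,
    Set.ncard_image_of_injective _ Sum.inl_injective,
    Set.ncard_image_of_injective _ Sum.inr_injective]

lemma Set.ncard_le_one_of_subset_singleton {α : Type*} {s : Set α} {a : α} (h : s ⊆ {a}) :
    s.ncard ≤ 1 :=
  (Set.ncard_le_ncard h).trans_eq (Set.ncard_singleton a)

open Set

section DominationIndependence

variable {V : Type*} {G : SimpleGraph V} {k : ℕ} {U S A : Set V} {v b w a : V}

lemma exists_isKDomOn_ncard_eq_gammaK (G : SimpleGraph V) (k : ℕ) (U : Set V) :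
    ∃ S, IsKDomOn G k U S ∧ S.ncard = gammaK G k U :=
  Nat.sInf_mem (s := {n | ∃ S, IsKDomOn G k U S ∧ S.ncard = n})
    ⟨_, U, ⟨subset_rfl, fun _ hx hxU => (hxU hx).elim⟩, rfl⟩

lemma gammaK_le_ncard (h : IsKDomOn G k U S) : gammaK G k U ≤ S.ncard :=
  Nat.sInf_le ⟨S, h, rfl⟩

lemma bddAbove_ncard_isKIndOn [Finite V] :
    BddAbove {n | ∃ S, IsKIndOn G k U S ∧ S.ncard = n} :=
  ⟨Nat.card V, by rintro _ ⟨S, -, rfl⟩; exact S.ncard_le_card⟩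

lemma exists_isKIndOn_ncard_eq_alphaK [Finite V] (G : SimpleGraph V) (k : ℕ) (U : Set V) :
    ∃ S, IsKIndOn G k U S ∧ S.ncard = alphaK G k U :=
  Nat.sSup_mem (s := {n | ∃ S, IsKIndOn G k U S ∧ S.ncard = n})
    ⟨0, ∅, ⟨empty_subset _, fun _ h => h.elim⟩, ncard_empty _⟩ bddAbove_ncard_isKIndOn

lemma ncard_le_alphaK [Finite V] (h : IsKIndOn G k U S) : S.ncard ≤ alphaK G k U :=
  le_csSup bddAbove_ncard_isKIndOn ⟨S, h, rfl⟩

lemma IsKDomOn.mem_of_ncard_neighborSet_lt [Finite V] {x : V} (h : IsKDomOn G k U S)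
    (hx : x ∈ U) (hlt : (G.neighborSet x).ncard < k) : x ∈ S := by
  by_contra hxS
  exact (h.2 x hx hxS).not_gt ((ncard_inter_le_ncard_left _ _).trans_lt hlt)

lemma isKIndOn_two_insert_of_neighborSet_eq_singleton [Finite V]
    (hv : G.neighborSet v = {b}) (hA : IsKIndOn G 2 univ A)
    (hb : b ∈ A → G.neighborSet b ∩ A = ∅) : IsKIndOn G 2 univ (insert v A) := by
  refine ⟨subset_univ _, ?_⟩
  rintro x (rfl | hxA)
  · exact ncard_le_one_of_subset_singleton (inter_subset_left.trans hv.subset)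
  by_cases hxb : x = b
  · subst hxb
    refine ncard_le_one_of_subset_singleton (a := v) fun y ⟨hy, hyA⟩ => ?_
    rcases hyA with rfl | hyA
    · rfl
    · exact ((hb hxA).subset ⟨hy, hyA⟩).elim
  · have hvx : v ∉ G.neighborSet x := fun hvx => hxb (hv ▸ G.adj_symm hvx : x ∈ ({b} : Set V))
    rw [inter_insert_of_notMem hvx]
    exact hA.2 x hxA

lemma isKIndOn_two_exchange_of_neighborSet_eq_singleton [Finite V]
    (ha : G.neighborSet a = {w}) (hA : IsKIndOn G 2 univ A) (hw : G.neighborSet w ∩ A ⊆ {b}) :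
    IsKIndOn G 2 univ (insert a (A \ {b})) := by
  refine ⟨subset_univ _, ?_⟩
  rintro x (rfl | ⟨hxA, hxb⟩)
  · exact ncard_le_one_of_subset_singleton (inter_subset_left.trans ha.subset)
  by_cases hxw : x = w
  · subst hxw
    refine ncard_le_one_of_subset_singleton (a := a) fun y ⟨hy, hyA⟩ => ?_
    rcases hyA with rfl | ⟨hyA, hyb⟩
    · rfl
    · exact (hyb (hw ⟨hy, hyA⟩)).elim
  · have hax : a ∉ G.neighborSet x := fun hax => hxw (ha ▸ G.adj_symm hax : x ∈ ({w} : Set V))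
    rw [inter_insert_of_notMem hax]
    exact (ncard_le_ncard (inter_subset_inter_right _ sdiff_subset)).trans (hA.2 x hxA)

/-- In a configuration `v – b – w – a` with leaves `v`, `a` and `deg b = 2`, a 2-independent set
avoiding `v` is not maximum. -/
lemma ncard_add_one_le_alphaK [Finite V] (hv : G.neighborSet v = {b})
    (hb : G.neighborSet b = {v, w}) (ha : G.neighborSet a = {w}) (hva : v ≠ a) (hba : b ≠ a)
    (hA : IsKIndOn G 2 univ A) (hvA : v ∉ A) : A.ncard + 1 ≤ alphaK G 2 univ := by
  by_cases hbw : b ∈ A ∧ w ∈ A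
  · obtain ⟨hbA, hwA⟩ := hbw
    have hbNw : b ∈ G.neighborSet w ∩ A :=
      ⟨G.adj_symm (by simp [← mem_neighborSet, hb]), hbA⟩
    have hw : G.neighborSet w ∩ A ⊆ {b} := fun _ hy =>
      (ncard_le_one_iff (toFinite _)).mp (hA.2 w hwA) hy hbNw
    have haA : a ∉ A := fun haA =>
      hba (hw ⟨G.adj_symm (by simp [← mem_neighborSet, ha]), haA⟩).symm
    have hbA' : b ∉ insert a (A \ {b}) := by simp [hba]
    have hvA' : v ∉ insert a (A \ {b}) := by simp [hva, hvA]
    calc A.ncard + 1 = (insert v (insert a (A \ {b}))).ncard := by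
          rw [ncard_insert_of_notMem hvA', ncard_exchange haA hbA]
      _ ≤ alphaK G 2 univ := ncard_le_alphaK <|
          isKIndOn_two_insert_of_neighborSet_eq_singleton hv
            (isKIndOn_two_exchange_of_neighborSet_eq_singleton ha hA hw) (absurd · hbA')
  · refine (ncard_insert_of_notMem hvA).symm.le.trans
      (ncard_le_alphaK (isKIndOn_two_insert_of_neighborSet_eq_singleton hv hA fun hbA => ?_))
    rw [hb, eq_empty_iff_forall_notMem]
    rintro y ⟨rfl | rfl, hyA⟩
    exacts [hvA hyA, hbw ⟨hbA, hyA⟩]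

end DominationIndependence

namespace SimpleGraph

variable {V : Type*}

/-- `G` with a new path `v – u₁ – u₂` attached at `v`, where `u₁ = inr 0` and `u₂ = inr 1`. -/
def attachPendantPath (G : SimpleGraph V) (v : V) : SimpleGraph (V ⊕ Fin 2) where
  Adj
    | .inl x, .inl y => G.Adj x y
    | .inl x, .inr i | .inr i, .inl x => x = v ∧ i = 0
    | .inr i, .inr j => i ≠ j
  symm := by
    constructor
    rintro (x | i) (y | j) h
    exacts [h.symm, h, h, Ne.symm h]
  loopless := by
    constructor
    rintro (x | i) h
    exacts [G.irrefl h, h rfl]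

variable {G : SimpleGraph V} {v : V} {k : ℕ} {S : Set (V ⊕ Fin 2)}

@[simp] lemma attachPendantPath_adj_inl_inl {x y : V} :
    (G.attachPendantPath v).Adj (.inl x) (.inl y) ↔ G.Adj x y := Iff.rfl

@[simp] lemma attachPendantPath_adj_inl_inr {x : V} {i : Fin 2} :
    (G.attachPendantPath v).Adj (.inl x) (.inr i) ↔ x = v ∧ i = 0 := Iff.rfl

@[simp] lemma attachPendantPath_adj_inr_inl {x : V} {i : Fin 2} :
    (G.attachPendantPath v).Adj (.inr i) (.inl x) ↔ x = v ∧ i = 0 := Iff.rfl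

@[simp] lemma attachPendantPath_adj_inr_inr {i j : Fin 2} :
    (G.attachPendantPath v).Adj (.inr i) (.inr j) ↔ i ≠ j := Iff.rfl

lemma attachPendantPath_neighborSet_inr_zero :
    (G.attachPendantPath v).neighborSet (.inr 0) = {.inr 1, .inl v} := by
  ext (x | i)
  · simp [eq_comm]
  · fin_cases i <;> simp

lemma attachPendantPath_neighborSet_inr_one :
    (G.attachPendantPath v).neighborSet (.inr 1) = {.inr 0} := by
  ext (x | i)
  · simp
  · fin_cases i <;> simp

lemma ncard_attachPendantPath_neighborSet_inl_inter [Finite V] (x : V) (S : Set (V ⊕ Fin 2)) :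
    ((G.attachPendantPath v).neighborSet (.inl x) ∩ S).ncard =
      (G.neighborSet x ∩ Sum.inl ⁻¹' S).ncard +
        ({i : Fin 2 | x = v ∧ i = 0} ∩ Sum.inr ⁻¹' S).ncard := by
  rw [← ncard_preimage_inl_add_ncard_preimage_inr]
  rfl

lemma ncard_neighborSet_inter_preimage_inl_le [Finite V] (x : V) (S : Set (V ⊕ Fin 2)) :
    (G.neighborSet x ∩ Sum.inl ⁻¹' S).ncard ≤
      ((G.attachPendantPath v).neighborSet (.inl x) ∩ S).ncard :=
  ncard_attachPendantPath_neighborSet_inl_inter (v := v) x S ▸ Nat.le_add_right _ _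

lemma ncard_attachPendantPath_neighborSet_inl_inter_of_ne [Finite V] {x : V} (hx : x ≠ v)
    (S : Set (V ⊕ Fin 2)) :
    ((G.attachPendantPath v).neighborSet (.inl x) ∩ S).ncard =
      (G.neighborSet x ∩ Sum.inl ⁻¹' S).ncard := by
  simp [ncard_attachPendantPath_neighborSet_inl_inter, hx]

lemma IsKDomOn.inr_one_mem [Finite V] (hS : IsKDomOn (G.attachPendantPath v) 2 univ S) :
    .inr 1 ∈ S :=
  hS.mem_of_ncard_neighborSet_lt (mem_univ _) (by simp [attachPendantPath_neighborSet_inr_one])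

lemma IsKDomOn.insert_preimage_inl [Finite V] (hS : IsKDomOn (G.attachPendantPath v) k univ S) :
    IsKDomOn G k univ (insert v (Sum.inl ⁻¹' S)) := by
  refine ⟨subset_univ _, fun x _ hx => ?_⟩
  obtain ⟨hxv, hxS⟩ : x ≠ v ∧ .inl x ∉ S := by simpa [not_or] using hx
  calc k ≤ ((G.attachPendantPath v).neighborSet (.inl x) ∩ S).ncard := hS.2 _ (mem_univ _) hxS
    _ = (G.neighborSet x ∩ Sum.inl ⁻¹' S).ncard :=
      ncard_attachPendantPath_neighborSet_inl_inter_of_ne hxv S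
    _ ≤ _ := ncard_le_ncard (inter_subset_inter_right _ (subset_insert _ _))

lemma IsKDomOn.ncard_insert_preimage_inl_add_one_le [Finite V]
    (hS : IsKDomOn (G.attachPendantPath v) 2 univ S) :
    (insert v (Sum.inl ⁻¹' S)).ncard + 1 ≤ S.ncard := by
  rw [← ncard_preimage_inl_add_ncard_preimage_inr S]
  by_cases hv : .inl v ∈ S
  · rw [insert_eq_of_mem (show v ∈ Sum.inl ⁻¹' S from hv)]
    have := (ncard_pos (toFinite (Sum.inr ⁻¹' S))).mpr ⟨1, hS.inr_one_mem⟩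
    omega
  · -- `u₁` needs two neighbours in `S`, but `v` is not one of them
    have h0 : .inr 0 ∈ S := by
      by_contra h0
      refine (hS.2 _ (mem_univ _) h0).not_gt (Nat.lt_succ_of_le ?_)
      refine ncard_le_one_of_subset_singleton (a := .inr 1) ?_
      rw [attachPendantPath_neighborSet_inr_zero]
      rintro y ⟨rfl | rfl, hy⟩
      exacts [rfl, (hv hy).elim]
    have hinr : Sum.inr ⁻¹' S = univ := by
      ext i; fin_cases i <;> simp [h0, hS.inr_one_mem]
    rw [hinr, ncard_univ, Nat.card_fin]
    have := ncard_insert_le v (Sum.inl ⁻¹' S)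
    omega

lemma gammaK_add_one_le_gammaK_attachPendantPath [Finite V] :
    gammaK G 2 univ + 1 ≤ gammaK (G.attachPendantPath v) 2 univ := by
  obtain ⟨S, hS, hcard⟩ := exists_isKDomOn_ncard_eq_gammaK (G.attachPendantPath v) 2 univ
  calc gammaK G 2 univ + 1 ≤ (insert v (Sum.inl ⁻¹' S)).ncard + 1 :=
        Nat.add_le_add_right (gammaK_le_ncard hS.insert_preimage_inl) 1
    _ ≤ _ := hcard ▸ hS.ncard_insert_preimage_inl_add_one_le

lemma preimage_inl_insert_inr_one_image_inl (A : Set V) :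
    Sum.inl ⁻¹' (insert (.inr 1) (Sum.inl '' A) : Set (V ⊕ Fin 2)) = A := by
  ext; simp

lemma ncard_insert_inr_one_image_inl [Finite V] (A : Set V) :
    (insert (.inr 1) (Sum.inl '' A) : Set (V ⊕ Fin 2)).ncard = A.ncard + 1 := by
  rw [ncard_insert_of_notMem (by simp), ncard_image_of_injective _ Sum.inl_injective]

lemma gammaK_attachPendantPath_le [Finite V] (hv : (G.neighborSet v).ncard ≤ 1) :
    gammaK (G.attachPendantPath v) 2 univ ≤ gammaK G 2 univ + 1 := by
  obtain ⟨A, hA, hcard⟩ := exists_isKDomOn_ncard_eq_gammaK G 2 univ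
  have hvA : v ∈ A := hA.mem_of_ncard_neighborSet_lt (mem_univ v) (by omega)
  set S : Set (V ⊕ Fin 2) := insert (.inr 1) (Sum.inl '' A) with hSdef
  suffices hS : IsKDomOn (G.attachPendantPath v) 2 univ S from
    (gammaK_le_ncard hS).trans_eq (by rw [hSdef, ncard_insert_inr_one_image_inl, hcard])
  refine ⟨subset_univ _, ?_⟩
  rintro (x | i) - hxS
  · have hxA : x ∉ A := fun hxA => hxS (mem_insert_of_mem _ (mem_image_of_mem _ hxA))
    rw [ncard_attachPendantPath_neighborSet_inl_inter_of_ne (ne_of_mem_of_not_mem hvA hxA).symm,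
      preimage_inl_insert_inr_one_image_inl]
    exact hA.2 x (mem_univ x) hxA
  · fin_cases i
    · have hsub : {.inr 1, .inl v} ⊆ S := by
        rintro _ (rfl | rfl)
        exacts [mem_insert _ _, mem_insert_of_mem _ (mem_image_of_mem _ hvA)]
      simp [attachPendantPath_neighborSet_inr_zero, inter_eq_left.mpr hsub]
    · exact (hxS (mem_insert _ _)).elim

lemma alphaK_add_one_le_alphaK_attachPendantPath [Finite V] :
    alphaK G 2 univ + 1 ≤ alphaK (G.attachPendantPath v) 2 univ := by
  obtain ⟨A, hA, hcard⟩ := exists_isKIndOn_ncard_eq_alphaK G 2 univ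
  set S : Set (V ⊕ Fin 2) := insert (.inr 1) (Sum.inl '' A) with hSdef
  suffices hS : IsKIndOn (G.attachPendantPath v) 2 univ S from
    (by rw [hSdef, ncard_insert_inr_one_image_inl, hcard] : _ = S.ncard).trans_le
      (ncard_le_alphaK hS)
  refine ⟨subset_univ _, ?_⟩
  rintro (x | i) hxS
  · have hxA : x ∈ A := by simpa [S] using hxS
    have hinr : Sum.inr ⁻¹' S = {1} := by ext i; fin_cases i <;> simp [S]
    rw [ncard_attachPendantPath_neighborSet_inl_inter, preimage_inl_insert_inr_one_image_inl,
      hinr]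
    simpa using hA.2 x hxA
  · fin_cases i
    · simp [S] at hxS
    · simp [attachPendantPath_neighborSet_inr_one, S]

lemma IsKIndOn.preimage_inl [Finite V] (hS : IsKIndOn (G.attachPendantPath v) k univ S) :
    IsKIndOn G k univ (Sum.inl ⁻¹' S) :=
  ⟨subset_univ _, fun x hx => (ncard_neighborSet_inter_preimage_inl_le x S).trans (hS.2 _ hx)⟩

lemma alphaK_attachPendantPath_le [Finite V] {b w a : V} (hv : G.neighborSet v = {b})
    (hb : G.neighborSet b = {v, w}) (ha : G.neighborSet a = {w}) (hva : v ≠ a) (hba : b ≠ a) :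
    alphaK (G.attachPendantPath v) 2 univ ≤ alphaK G 2 univ + 1 := by
  obtain ⟨S, hS, hcard⟩ := exists_isKIndOn_ncard_eq_alphaK (G.attachPendantPath v) 2 univ
  have hA := ncard_le_alphaK hS.preimage_inl
  rw [← hcard, ← ncard_preimage_inl_add_ncard_preimage_inr]
  by_cases hinr : Sum.inr ⁻¹' S = univ
  · -- `u₁` already has its one allowed neighbour `u₂` in `S`, so `v ∉ S`
    have hvS : v ∉ Sum.inl ⁻¹' S := by
      intro hvS
      have hsub : {.inr 1, .inl v} ⊆ S := by
        rintro _ (rfl | rfl)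
        exacts [show (1 : Fin 2) ∈ Sum.inr ⁻¹' S from hinr ▸ mem_univ _, hvS]
      have := hS.2 (.inr 0) (show (0 : Fin 2) ∈ Sum.inr ⁻¹' S from hinr ▸ mem_univ _)
      simp [attachPendantPath_neighborSet_inr_zero, inter_eq_left.mpr hsub] at this
    have := ncard_add_one_le_alphaK hv hb ha hva hba hS.preimage_inl hvS
    rw [hinr, ncard_univ, Nat.card_fin]
    omega
  · have : (Sum.inr ⁻¹' S).ncard < 2 := by
      simpa using ncard_lt_ncard (ssubset_univ_iff.mpr hinr)
    omega

end SimpleGraph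

theorem stmt10_general {V : Type*} [Fintype V] (T' : SimpleGraph V)
    (v b w a : V) (hdist : ([v, b, w, a] : List V).Pairwise (· ≠ ·))
    (hvb : T'.Adj v b) (hbw : T'.Adj b w) (hwa : T'.Adj w a)
    (hdv : (T'.neighborSet v).ncard = 1) (hdb : (T'.neighborSet b).ncard = 2)
    (hda : (T'.neighborSet a).ncard = 1)
    (T : SimpleGraph (V ⊕ Fin 2))
    (hadj : ∀ a b, T.Adj a b ↔
      ((∃ x y, T'.Adj x y ∧ a = Sum.inl x ∧ b = Sum.inl y) ∨
       (a = (Sum.inr 0 : V ⊕ Fin 2) ∧ b = Sum.inr 1) ∨ (a = Sum.inr 1 ∧ b = (Sum.inr 0 : V ⊕ Fin 2)) ∨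
       (a = Sum.inl v ∧ b = (Sum.inr 0 : V ⊕ Fin 2)) ∨ (a = (Sum.inr 0 : V ⊕ Fin 2) ∧ b = Sum.inl v))) :
    gammaK T 2 Set.univ = gammaK T' 2 Set.univ + 1 ∧
    alphaK T 2 Set.univ = alphaK T' 2 Set.univ + 1 ∧
    (alphaK T 2 Set.univ : ℤ) - (gammaK T 2 Set.univ : ℤ) =
      (alphaK T' 2 Set.univ : ℤ) - (gammaK T' 2 Set.univ : ℤ) := by
  obtain rfl : T = T'.attachPendantPath v := by
    ext (x | i) (y | j)
    · simp [hadj]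
    · fin_cases j <;> simp [hadj]
    · fin_cases i <;> simp [hadj, eq_comm]
    · fin_cases i <;> fin_cases j <;> simp [hadj]
  obtain ⟨⟨-, hvw, hva⟩, ⟨-, hba⟩, -⟩ : (v ≠ b ∧ v ≠ w ∧ v ≠ a) ∧ (b ≠ w ∧ b ≠ a) ∧ w ≠ a := by
    simpa using hdist
  have hNv : T'.neighborSet v = {b} :=
    (eq_of_subset_of_ncard_le (by simpa using hvb) (by simp [hdv])).symm
  have hNb : T'.neighborSet b = {v, w} :=
    (eq_of_subset_of_ncard_le (by simp [insert_subset_iff, hvb.symm, hbw])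
      (by simp [hdb, ncard_pair hvw])).symm
  have hNa : T'.neighborSet a = {w} :=
    (eq_of_subset_of_ncard_le (by simpa using hwa.symm) (by simp [hda])).symm
  have hγ := (gammaK_attachPendantPath_le hdv.le).antisymm
    gammaK_add_one_le_gammaK_attachPendantPath
  have hα := (alphaK_attachPendantPath_le hNv hNb hNa hva hba).antisymm
    alphaK_add_one_le_alphaK_attachPendantPath
  refine ⟨hγ, hα, ?_⟩
  rw [hγ, hα]
  push_cast
  ring

theorem stmt10 {V : Type*} [Fintype V] (T' : SimpleGraph V) (hT' : T'.IsTree)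
    (v b w a : V) (hdist : ([v, b, w, a] : List V).Pairwise (· ≠ ·))
    (hvb : T'.Adj v b) (hbw : T'.Adj b w) (hwa : T'.Adj w a)
    (hdv : (T'.neighborSet v).ncard = 1) (hdb : (T'.neighborSet b).ncard = 2)
    (hda : (T'.neighborSet a).ncard = 1)
    (T : SimpleGraph (V ⊕ Fin 2))
    (hadj : ∀ a b, T.Adj a b ↔
      ((∃ x y, T'.Adj x y ∧ a = Sum.inl x ∧ b = Sum.inl y) ∨
       (a = (Sum.inr 0 : V ⊕ Fin 2) ∧ b = Sum.inr 1) ∨ (a = Sum.inr 1 ∧ b = (Sum.inr 0 : V ⊕ Fin 2)) ∨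
       (a = Sum.inl v ∧ b = (Sum.inr 0 : V ⊕ Fin 2)) ∨ (a = (Sum.inr 0 : V ⊕ Fin 2) ∧ b = Sum.inl v))) :
    gammaK T 2 Set.univ = gammaK T' 2 Set.univ + 1 ∧
    alphaK T 2 Set.univ = alphaK T' 2 Set.univ + 1 ∧
    (alphaK T 2 Set.univ : ℤ) - (gammaK T 2 Set.univ : ℤ) =
      (alphaK T' 2 Set.univ : ℤ) - (gammaK T' 2 Set.univ : ℤ) :=
  stmt10_general T' v b w a hdist hvb hbw hwa hdv hdb hda T hadj
end

section
/- Let T' be a finite tree containing five distinct vertices a, v, b, c, d such that v is adjacent to a and b, and b–c–d is a path in T', where in T' the degrees satisfy deg(a) = 1, deg(b) = deg(c) = 2, and deg(d) = 1. Let T be the tree obtained from T' by adding three new vertices u₁, u₂, u₃ with edges u₁u₂, u₂u₃, and vu₁. Then γ₂(T) = γ₂(T') + 2 and α₂(T) = α₂(T') + 2; in particular α₂(T) − γ₂(T) = α₂(T') − γ₂(T'). -/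
open SimpleGraph

section Aux

variable {W : Type*} [Fintype W] (G : SimpleGraph W)

lemma gammaK_le' {S : Set W} (h : IsKDomOn G 2 Set.univ S) :
    gammaK G 2 Set.univ ≤ S.ncard := Nat.sInf_le ⟨S, h, rfl⟩

lemma gammaK_exists' : ∃ S, IsKDomOn G 2 Set.univ S ∧ S.ncard = gammaK G 2 Set.univ := by
  have hne : {n | ∃ S, IsKDomOn G 2 Set.univ S ∧ S.ncard = n}.Nonempty :=
    ⟨(Set.univ : Set W).ncard, Set.univ,
      ⟨subset_rfl, fun w _ hw => absurd (Set.mem_univ w) hw⟩, rfl⟩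
  exact Nat.sInf_mem hne

lemma alphaK_bdd' : BddAbove {n | ∃ S, IsKIndOn G 2 Set.univ S ∧ S.ncard = n} := by
  refine ⟨(Set.univ : Set W).ncard, ?_⟩
  rintro n ⟨S, _, rfl⟩
  exact Set.ncard_le_ncard (Set.subset_univ S) Set.finite_univ

lemma le_alphaK' {S : Set W} (h : IsKIndOn G 2 Set.univ S) :
    S.ncard ≤ alphaK G 2 Set.univ := le_csSup (alphaK_bdd' G) ⟨S, h, rfl⟩

lemma alphaK_exists' : ∃ S, IsKIndOn G 2 Set.univ S ∧ S.ncard = alphaK G 2 Set.univ := by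
  have hne : {n | ∃ S, IsKIndOn G 2 Set.univ S ∧ S.ncard = n}.Nonempty :=
    ⟨0, ∅, ⟨Set.empty_subset _, fun w hw => absurd hw (Set.notMem_empty w)⟩, Set.ncard_empty _⟩
  exact Nat.sSup_mem hne (alphaK_bdd' G)

lemma sum_split' {V : Type*} [Fintype V] (S : Set (V ⊕ Fin 3)) :
    S.ncard = (Sum.inl ⁻¹' S).ncard + (Sum.inr ⁻¹' S).ncard := by
  have h : S = Sum.inl '' (Sum.inl ⁻¹' S) ∪ Sum.inr '' (Sum.inr ⁻¹' S) := by
    ext w; cases w <;> simp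
  have hdisj : Disjoint (Sum.inl '' (Sum.inl ⁻¹' S)) (Sum.inr '' (Sum.inr ⁻¹' S)) :=
    Set.disjoint_left.mpr (by rintro _ ⟨x, _, rfl⟩ ⟨y, _, h⟩; exact Sum.inl_ne_inr h.symm)
  conv_lhs => rw [h]
  rw [Set.ncard_union_eq hdisj (Set.toFinite _) (Set.toFinite _),
    Set.ncard_image_of_injective _ Sum.inl_injective,
    Set.ncard_image_of_injective _ Sum.inr_injective]

end Aux

theorem stmt14 {V : Type*} [Fintype V] (T' : SimpleGraph V) (hT' : T'.IsTree)
    (a v b c d : V) (hdist : ([a, v, b, c, d] : List V).Pairwise (· ≠ ·))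
    (hva : T'.Adj v a) (hvb : T'.Adj v b) (hbc : T'.Adj b c) (hcd : T'.Adj c d)
    (hda : (T'.neighborSet a).ncard = 1) (hdb : (T'.neighborSet b).ncard = 2)
    (hdc : (T'.neighborSet c).ncard = 2) (hdd : (T'.neighborSet d).ncard = 1)
    (T : SimpleGraph (V ⊕ Fin 3))
    (hadj : ∀ a b, T.Adj a b ↔
      ((∃ x y, T'.Adj x y ∧ a = Sum.inl x ∧ b = Sum.inl y) ∨
       (a = (Sum.inr 0 : V ⊕ Fin 3) ∧ b = Sum.inr 1) ∨ (a = Sum.inr 1 ∧ b = (Sum.inr 0 : V ⊕ Fin 3)) ∨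
       (a = (Sum.inr 1 : V ⊕ Fin 3) ∧ b = Sum.inr 2) ∨ (a = Sum.inr 2 ∧ b = (Sum.inr 1 : V ⊕ Fin 3)) ∨
       (a = Sum.inl v ∧ b = (Sum.inr 0 : V ⊕ Fin 3)) ∨ (a = (Sum.inr 0 : V ⊕ Fin 3) ∧ b = Sum.inl v))) :
    gammaK T 2 Set.univ = gammaK T' 2 Set.univ + 2 ∧
    alphaK T 2 Set.univ = alphaK T' 2 Set.univ + 2 ∧
    (alphaK T 2 Set.univ : ℤ) - (gammaK T 2 Set.univ : ℤ) =
      (alphaK T' 2 Set.univ : ℤ) - (gammaK T' 2 Set.univ : ℤ) := by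
  -- distinctness
  simp only [List.pairwise_cons, List.mem_cons, List.mem_singleton, List.not_mem_nil,
    forall_eq_or_imp, forall_eq] at hdist
  obtain ⟨⟨hav, hab, hac, had⟩, ⟨hvb', hvc, hvd⟩, ⟨hbc', hbd⟩, ⟨hcd', -⟩, -⟩ := hdist
  -- adjacency between inl's
  have hll : ∀ x y : V, T.Adj (Sum.inl x) (Sum.inl y) ↔ T'.Adj x y := by
    intro x y
    rw [hadj]
    constructor
    · rintro (⟨p, q, hpq, hp, hq⟩ | h | h | h | h | h | h) <;>
        first
          | (cases Sum.inl_injective hp; cases Sum.inl_injective hq; exact hpq)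
          | (exfalso; revert h; simp; done)
    · intro h; exact Or.inl ⟨x, y, h, rfl, rfl⟩
  have hl12 : ∀ (x : V) (i : Fin 3), T.Adj (Sum.inl x) (Sum.inr i) → i = 0 := by
    intro x i h
    rw [hadj] at h
    rcases h with ⟨p, q, hpq, hp, hq⟩ | h | h | h | h | h | h <;>
      first
        | (exfalso; revert hq; simp; done)
        | (exfalso; revert h; simp; done)
        | exact Sum.inr_injective h.2
  -- neighbor sets in T
  have hNv : T.neighborSet (Sum.inl v) = Sum.inl '' T'.neighborSet v ∪ {Sum.inr 0} := by
    ext w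
    simp only [mem_neighborSet, Set.mem_union, Set.mem_image, Set.mem_singleton_iff]
    constructor
    · intro h
      match w with
      | Sum.inl y => exact Or.inl ⟨y, (hll v y).mp h, rfl⟩
      | Sum.inr i => exact Or.inr (by rw [hl12 v i h])
    · rintro (⟨y, hy, rfl⟩ | rfl)
      · exact (hll v y).mpr hy
      · rw [hadj]; tauto
  have hNx : ∀ x : V, x ≠ v → T.neighborSet (Sum.inl x) = Sum.inl '' T'.neighborSet x := by
    intro x hxv
    ext w
    simp only [mem_neighborSet, Set.mem_image]
    constructor
    · intro h
      match w with
      | Sum.inl y => exact ⟨y, (hll x y).mp h, rfl⟩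
      | Sum.inr i =>
        have := hl12 x i h
        subst this
        rw [hadj] at h
        rcases h with ⟨p, q, hpq, hp, hq⟩ | h | h | h | h | h | h <;>
          first
            | (exfalso; revert hq; simp; done)
            | (exfalso; revert h; simp; done)
            | exact absurd (Sum.inl_injective h.1) hxv
    · rintro ⟨y, hy, rfl⟩; exact (hll x y).mpr hy
  have hN0 : T.neighborSet (Sum.inr 0 : V ⊕ Fin 3) = {Sum.inl v, Sum.inr 1} := by
    ext w
    simp only [mem_neighborSet, Set.mem_insert_iff, Set.mem_singleton_iff, hadj]
    constructor
    · rintro (⟨p, q, hpq, hp, hq⟩ | h | h | h | h | h | h) <;>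
        first
          | (exfalso; revert hp; simp; done)
          | (exfalso; revert h; simp; done)
          | exact Or.inl h.2
          | exact Or.inr h.2
    · rintro (rfl | rfl) <;> tauto
  have hN1 : T.neighborSet (Sum.inr 1 : V ⊕ Fin 3) = {Sum.inr 0, Sum.inr 2} := by
    ext w
    simp only [mem_neighborSet, Set.mem_insert_iff, Set.mem_singleton_iff, hadj]
    constructor
    · rintro (⟨p, q, hpq, hp, hq⟩ | h | h | h | h | h | h) <;>
        first
          | (exfalso; revert hp; simp; done)
          | (exfalso; revert h; simp; done)
          | exact Or.inl h.2
          | exact Or.inr h.2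
    · rintro (rfl | rfl) <;> tauto
  have hN2 : T.neighborSet (Sum.inr 2 : V ⊕ Fin 3) = {Sum.inr 1} := by
    ext w
    simp only [mem_neighborSet, Set.mem_singleton_iff, hadj]
    constructor
    · rintro (⟨p, q, hpq, hp, hq⟩ | h | h | h | h | h | h) <;>
        first
          | (exfalso; revert hp; simp; done)
          | (exfalso; revert h; simp; done)
          | exact h.2
    · rintro rfl; tauto
  -- neighbor sets of a and b in T'
  have hNa : T'.neighborSet a = {v} := by
    obtain ⟨x, hx⟩ := Set.ncard_eq_one.mp hda
    have hv : v ∈ T'.neighborSet a := hva.symm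
    rw [hx] at hv ⊢
    rw [Set.mem_singleton_iff] at hv
    rw [hv]
  have hNb : T'.neighborSet b = {v, c} := by
    have hsub : ({v, c} : Set V) ⊆ T'.neighborSet b := by
      rintro x (rfl | rfl)
      · exact hvb.symm
      · exact hbc
    exact (Set.eq_of_subset_of_ncard_le hsub
      (by rw [hdb, Set.ncard_pair hvc]) (Set.toFinite _)).symm
  -- γ upper bound
  obtain ⟨S', hS', hcard'⟩ := gammaK_exists' T'
  have hup : gammaK T 2 Set.univ ≤ gammaK T' 2 Set.univ + 2 := by
    have hdom : IsKDomOn T 2 Set.univ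
        (Sum.inl '' S' ∪ {Sum.inr 0, Sum.inr 2}) := by
      refine ⟨Set.subset_univ _, ?_⟩
      rintro w - hw
      match w with
      | Sum.inl x =>
        have hx : x ∉ S' := fun h => hw (Or.inl ⟨x, h, rfl⟩)
        have h2 := hS'.2 x (Set.mem_univ x) hx
        calc 2 ≤ (T'.neighborSet x ∩ S').ncard := h2
          _ = (Sum.inl '' (T'.neighborSet x ∩ S')).ncard :=
            (Set.ncard_image_of_injective _ Sum.inl_injective).symm
          _ ≤ _ := by
            refine Set.ncard_le_ncard ?_ (Set.toFinite _)
            rintro _ ⟨y, ⟨hy1, hy2⟩, rfl⟩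
            exact ⟨(hll x y).mpr hy1, Or.inl ⟨y, hy2, rfl⟩⟩
      | Sum.inr i =>
        have hi : i = 0 ∨ i = 1 ∨ i = 2 := by omega
        rcases hi with rfl | rfl | rfl
        · exact absurd (Or.inr (Or.inl rfl)) hw
        · calc 2 = ({Sum.inr 0, Sum.inr 2} : Set (V ⊕ Fin 3)).ncard :=
              (Set.ncard_pair (by simp)).symm
            _ ≤ _ := by
              refine Set.ncard_le_ncard ?_ (Set.toFinite _)
              rintro w (rfl | rfl)
              · exact ⟨by rw [hN1]; exact Or.inl rfl, Or.inr (Or.inl rfl)⟩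
              · exact ⟨by rw [hN1]; exact Or.inr rfl, Or.inr (Or.inr rfl)⟩
        · exact absurd (Or.inr (Or.inr rfl)) hw
    calc gammaK T 2 Set.univ ≤ (Sum.inl '' S' ∪ {Sum.inr 0, Sum.inr 2}).ncard :=
        gammaK_le' T hdom
      _ = S'.ncard + 2 := by
        have hdisj : Disjoint (Sum.inl '' S') ({Sum.inr 0, Sum.inr 2} : Set (V ⊕ Fin 3)) :=
          Set.disjoint_left.mpr (by rintro _ ⟨y, _, rfl⟩ (h | h) <;> exact absurd h (by simp))
        rw [Set.ncard_union_eq hdisj (Set.toFinite _) (Set.toFinite _),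
          Set.ncard_image_of_injective _ Sum.inl_injective, Set.ncard_pair (by simp)]
      _ = gammaK T' 2 Set.univ + 2 := by rw [hcard']
  -- γ lower bound
  obtain ⟨S, hS, hcard⟩ := gammaK_exists' T
  have hlow : gammaK T' 2 Set.univ + 2 ≤ gammaK T 2 Set.univ := by
    have hu2 : (Sum.inr 2 : V ⊕ Fin 3) ∈ S := by
      by_contra h
      have h2 := hS.2 _ (Set.mem_univ _) h
      have hsub : T.neighborSet (Sum.inr 2) ∩ S ⊆ {Sum.inr 1} := by
        rw [hN2]; exact Set.inter_subset_left
      have := Set.ncard_le_ncard hsub (Set.toFinite _)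
      rw [Set.ncard_singleton] at this
      omega
    have hu01 : (Sum.inr 0 : V ⊕ Fin 3) ∈ S ∨ (Sum.inr 1 : V ⊕ Fin 3) ∈ S := by
      by_contra h
      push_neg at h
      have h2 := hS.2 _ (Set.mem_univ _) h.2
      have hsub : T.neighborSet (Sum.inr 1) ∩ S ⊆ {Sum.inr 2} := by
        rw [hN1]
        rintro w ⟨(rfl | rfl), hw⟩
        · exact absurd hw h.1
        · rfl
      have := Set.ncard_le_ncard hsub (Set.toFinite _)
      rw [Set.ncard_singleton] at this
      omega
    have hdom : IsKDomOn T' 2 Set.univ (Sum.inl ⁻¹' S) := by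
      refine ⟨Set.subset_univ _, ?_⟩
      rintro x - hx
      by_cases hxv : x = v
      · obtain rfl := hxv.symm
        have hvS : Sum.inl v ∉ S := hx
        have haS : Sum.inl a ∈ S := by
          by_contra h
          have h2 := hS.2 _ (Set.mem_univ _) h
          have hsub : T.neighborSet (Sum.inl a) ∩ S ⊆ {Sum.inl v} := by
            rw [hNx a hav, hNa]
            rintro w ⟨⟨y, hy, rfl⟩, -⟩
            rw [Set.mem_singleton_iff] at hy
            rw [hy]; rfl
          have := Set.ncard_le_ncard hsub (Set.toFinite _)
          rw [Set.ncard_singleton] at this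
          omega
        have hbS : Sum.inl b ∈ S := by
          by_contra h
          have h2 := hS.2 _ (Set.mem_univ _) h
          have hsub : T.neighborSet (Sum.inl b) ∩ S ⊆ {Sum.inl c} := by
            rw [hNx b (Ne.symm hvb'), hNb]
            rintro w ⟨⟨y, hy, rfl⟩, hwS⟩
            rcases hy with rfl | rfl
            · exact absurd hwS hvS
            · rfl
          have := Set.ncard_le_ncard hsub (Set.toFinite _)
          rw [Set.ncard_singleton] at this
          omega
        have hsub : ({a, b} : Set V) ⊆ T'.neighborSet v ∩ Sum.inl ⁻¹' S := by
          rintro x (rfl | rfl)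
          · exact ⟨hva, haS⟩
          · exact ⟨hvb, hbS⟩
        calc 2 = ({a, b} : Set V).ncard := (Set.ncard_pair hab).symm
          _ ≤ _ := Set.ncard_le_ncard hsub (Set.toFinite _)
      · have h2 := hS.2 _ (Set.mem_univ (Sum.inl x)) hx
        have heq : T.neighborSet (Sum.inl x) ∩ S
            = Sum.inl '' (T'.neighborSet x ∩ Sum.inl ⁻¹' S) := by
          rw [hNx x hxv, Set.image_inter_preimage]
        rw [heq, Set.ncard_image_of_injective _ Sum.inl_injective] at h2
        exact h2
    have hge : 2 ≤ (Sum.inr ⁻¹' S : Set (Fin 3)).ncard := by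
      rcases hu01 with h | h
      · calc 2 = ({0, 2} : Set (Fin 3)).ncard := (Set.ncard_pair (by decide)).symm
          _ ≤ _ := Set.ncard_le_ncard (by rintro x (rfl | rfl) <;> assumption) (Set.toFinite _)
      · calc 2 = ({1, 2} : Set (Fin 3)).ncard := (Set.ncard_pair (by decide)).symm
          _ ≤ _ := Set.ncard_le_ncard (by rintro x (rfl | rfl) <;> assumption) (Set.toFinite _)
    have := gammaK_le' T' hdom
    have hsplit := sum_split' S
    omega
  -- α lower bound
  obtain ⟨B', hB', hcardB'⟩ := alphaK_exists' T'
  have haup : alphaK T' 2 Set.univ + 2 ≤ alphaK T 2 Set.univ := by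
    set B : Set (V ⊕ Fin 3) := Sum.inl '' B' ∪ {Sum.inr 1, Sum.inr 2} with hB
    have h0B : (Sum.inr 0 : V ⊕ Fin 3) ∉ B := by
      rintro (⟨y, -, hy⟩ | h | h)
      · exact absurd hy (by simp)
      · exact absurd h (by simp)
      · exact absurd h (by simp)
    have hind : IsKIndOn T 2 Set.univ B := by
      refine ⟨Set.subset_univ _, ?_⟩
      rintro w hw
      rcases hw with ⟨x, hx, rfl⟩ | hw | hw
      · have hkey : T.neighborSet (Sum.inl x) ∩ B = Sum.inl '' (T'.neighborSet x ∩ B') := by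
          ext w
          constructor
          · rintro ⟨hw1, hw2⟩
            match w with
            | Sum.inl y =>
              refine ⟨y, ⟨(hll x y).mp hw1, ?_⟩, rfl⟩
              rcases hw2 with ⟨z, hz, hzz⟩ | h | h
              · rwa [Sum.inl_injective hzz] at hz
              · exact absurd h (by simp)
              · exact absurd h (by simp)
            | Sum.inr i =>
              have := hl12 x i hw1
              subst this
              exact absurd hw2 h0B
          · rintro ⟨y, ⟨hy1, hy2⟩, rfl⟩
            exact ⟨(hll x y).mpr hy1, Or.inl ⟨y, hy2, rfl⟩⟩
        rw [hkey, Set.ncard_image_of_injective _ Sum.inl_injective]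
        exact hB'.2 x hx
      · rw [hw]
        have hsub : T.neighborSet (Sum.inr 1) ∩ B ⊆ {Sum.inr 2} := by
          rw [hN1]
          rintro w ⟨(rfl | rfl), hwB⟩
          · exact absurd hwB h0B
          · rfl
        have := Set.ncard_le_ncard hsub (Set.toFinite _)
        rw [Set.ncard_singleton] at this
        omega
      · rw [hw]
        have hsub : T.neighborSet (Sum.inr 2) ∩ B ⊆ {Sum.inr 1} := by
          rw [hN2]; exact Set.inter_subset_left
        have := Set.ncard_le_ncard hsub (Set.toFinite _)
        rw [Set.ncard_singleton] at this
        omega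
    have hcardB : B.ncard = B'.ncard + 2 := by
      have hdisj : Disjoint (Sum.inl '' B') ({Sum.inr 1, Sum.inr 2} : Set (V ⊕ Fin 3)) :=
        Set.disjoint_left.mpr (by rintro _ ⟨y, _, rfl⟩ (h | h) <;> exact absurd h (by simp))
      rw [hB, Set.ncard_union_eq hdisj (Set.toFinite _) (Set.toFinite _),
        Set.ncard_image_of_injective _ Sum.inl_injective, Set.ncard_pair (by simp)]
    have := le_alphaK' T hind
    omega
  -- α upper bound
  obtain ⟨B, hB, hcardB⟩ := alphaK_exists' T
  have halow : alphaK T 2 Set.univ ≤ alphaK T' 2 Set.univ + 2 := by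
    have hind : IsKIndOn T' 2 Set.univ (Sum.inl ⁻¹' B) := by
      refine ⟨Set.subset_univ _, ?_⟩
      intro x hx
      have h1 := hB.2 (Sum.inl x) hx
      have hsub : Sum.inl '' (T'.neighborSet x ∩ Sum.inl ⁻¹' B)
          ⊆ T.neighborSet (Sum.inl x) ∩ B := by
        rintro _ ⟨y, ⟨hy1, hy2⟩, rfl⟩
        exact ⟨(hll x y).mpr hy1, hy2⟩
      have := Set.ncard_le_ncard hsub (Set.toFinite _)
      rw [Set.ncard_image_of_injective _ Sum.inl_injective] at this
      omega
    have hle2 : (Sum.inr ⁻¹' B : Set (Fin 3)).ncard ≤ 2 := by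
      by_contra h
      push_neg at h
      have huniv : (Sum.inr ⁻¹' B : Set (Fin 3)) = Set.univ := by
        refine Set.eq_of_subset_of_ncard_le (Set.subset_univ _) ?_ (Set.toFinite _)
        rw [Set.ncard_univ]
        simp only [Nat.card_eq_fintype_card, Fintype.card_fin]
        omega
      have h0 : (0 : Fin 3) ∈ Sum.inr ⁻¹' B := by rw [huniv]; trivial
      have h1 : (1 : Fin 3) ∈ Sum.inr ⁻¹' B := by rw [huniv]; trivial
      have h2 : (2 : Fin 3) ∈ Sum.inr ⁻¹' B := by rw [huniv]; trivial
      have hcond := hB.2 (Sum.inr 1) h1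
      have hsub : ({Sum.inr 0, Sum.inr 2} : Set (V ⊕ Fin 3))
          ⊆ T.neighborSet (Sum.inr 1) ∩ B := by
        rintro w (rfl | rfl)
        · exact ⟨by rw [hN1]; exact Or.inl rfl, h0⟩
        · exact ⟨by rw [hN1]; exact Or.inr rfl, h2⟩
      have := Set.ncard_le_ncard hsub (Set.toFinite _)
      rw [Set.ncard_pair (by simp)] at this
      omega
    have := le_alphaK' T' hind
    have hsplit := sum_split' B
    omega
  refine ⟨by omega, by omega, by omega⟩
end
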